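/- Let A be a normal ordered subgroupoid of an ordered groupoid G. If g ≃_A h then g⁻¹ ≃_A h⁻¹ and gg⁻¹ ≃_A hh⁻¹. -/
import Mathlib


/-!  A one-sorted algebraic formalization of ordered groupoids (Ehresmann / Lawson style).
Arrows form the carrier; composition `g * h` is "defined" when `g⁻¹ * g = h * h⁻¹`,
and is junk otherwise.  `res f g` is the restriction `(f|g)` of axiom (OG3). -/

universe u v w u'

class OGroupoid (G : Type u) extends PartialOrder G, Mul G, Inv G where
  gpd_assoc : ∀ g h k : G, g⁻¹ * g = h * h⁻¹ → h⁻¹ * h = k * k⁻¹ →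
      (g * h) * k = g * (h * k)
  gpd_inv_inv : ∀ g : G, g⁻¹⁻¹ = g
  gpd_mul_inv_rev : ∀ g h : G, g⁻¹ * g = h * h⁻¹ → (g * h)⁻¹ = h⁻¹ * g⁻¹
  gpd_dom_mul : ∀ g h : G, g⁻¹ * g = h * h⁻¹ → (g * h) * (g * h)⁻¹ = g * g⁻¹
  gpd_ran_mul : ∀ g h : G, g⁻¹ * g = h * h⁻¹ → (g * h)⁻¹ * (g * h) = h⁻¹ * h
  gpd_id_left : ∀ g : G, g * g⁻¹ * g = g
  gpd_id_right : ∀ g : G, g * (g⁻¹ * g) = g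
  ord_inv : ∀ g h : G, g ≤ h → g⁻¹ ≤ h⁻¹
  ord_mul : ∀ g₁ g₂ h₁ h₂ : G, g₁ ≤ g₂ → h₁ ≤ h₂ →
      g₁⁻¹ * g₁ = h₁ * h₁⁻¹ → g₂⁻¹ * g₂ = h₂ * h₂⁻¹ → g₁ * h₁ ≤ g₂ * h₂
  res : G → G → G
  res_dom : ∀ f g : G, f * f⁻¹ = f → f ≤ g * g⁻¹ → res f g * (res f g)⁻¹ = f
  res_le : ∀ f g : G, f * f⁻¹ = f → f ≤ g * g⁻¹ → res f g ≤ g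
  res_unique : ∀ f g k : G, f * f⁻¹ = f → f ≤ g * g⁻¹ → k * k⁻¹ = f → k ≤ g →
      k = res f g

namespace OGroupoid

variable {G : Type u} [OGroupoid G]

/-- The domain identity `g𝐝 = g * g⁻¹`. -/
def dm (g : G) : G := g * g⁻¹

/-- The range identity `g𝐫 = g⁻¹ * g`. -/
def rn (g : G) : G := g⁻¹ * g

/-- The composition `g * h` is defined. -/
def Cmp (g h : G) : Prop := g⁻¹ * g = h * h⁻¹

/-- `e` is an identity of the groupoid. -/
def IsId (e : G) : Prop := e * e⁻¹ = e

/-- The corestriction `(g|f) = (f|g⁻¹)⁻¹` for an identity `f ≤ g𝐫`. -/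
def cor (g f : G) : G := (res f g⁻¹)⁻¹

end OGroupoid

open OGroupoid

/-- An ordered functor between ordered groupoids. -/
structure OFunctor (G : Type u) (H : Type v) [OGroupoid G] [OGroupoid H] where
  toFun : G → H
  map_mul : ∀ g h : G, Cmp g h → toFun (g * h) = toFun g * toFun h
  map_inv : ∀ g : G, toFun g⁻¹ = (toFun g)⁻¹
  map_le : ∀ g h : G, g ≤ h → toFun g ≤ toFun h

namespace OFunctor

variable {G : Type u} {H : Type v} [OGroupoid G] [OGroupoid H]

/-- Star-surjectivity: `φ` is a fibration of ordered groupoids. -/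
def StarSurjective (φ : OFunctor G H) : Prop :=
  ∀ e : G, IsId e → ∀ h : H, dm h = φ.toFun e → ∃ g : G, dm g = e ∧ φ.toFun g = h

/-- Star-injectivity: `φ` is an immersion of ordered groupoids. -/
def StarInjective (φ : OFunctor G H) : Prop :=
  ∀ g k : G, dm g = dm k → φ.toFun g = φ.toFun k → g = k

/-- A covering is a star-bijective ordered functor. -/
def IsCovering (φ : OFunctor G H) : Prop := StarSurjective φ ∧ StarInjective φ

/-- The kernel of an ordered functor. -/
def ker (φ : OFunctor G H) : Set G := {g : G | IsId (φ.toFun g)}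

end OFunctor

namespace OGroupoid

variable {G : Type u} [OGroupoid G]

/-- `A` is a subgroupoid: closed under inversion and (defined) composition. -/
def IsSubgroupoid (A : Set G) : Prop :=
  (∀ a ∈ A, a⁻¹ ∈ A) ∧ ∀ a ∈ A, ∀ b ∈ A, Cmp a b → a * b ∈ A

/-- `A` is a normal ordered subgroupoid of `G`: a wide subgroupoid, closed under
restriction, and closed under conjugation `h⁻¹ a k` whenever `h` and `k` have a
common upper bound in `G`. -/
def IsNormalOSub (A : Set G) : Prop :=
  IsSubgroupoid A ∧
  (∀ e : G, IsId e → e ∈ A) ∧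
  (∀ a ∈ A, ∀ e : G, IsId e → e ≤ dm a → res e a ∈ A) ∧
  (∀ a ∈ A, ∀ h k : G, (∃ g : G, h ≤ g ∧ k ≤ g) → dm h = dm a → rn a = dm k →
      h⁻¹ * a * k ∈ A)

/-- The relation `g ≃_A h`: there are `a, b, c, d ∈ A` with `a g b` and `c h d`
defined, `a g b ≤ h` and `c h d ≤ g`. -/
def simA (A : Set G) (g h : G) : Prop :=
  (∃ a ∈ A, ∃ b ∈ A, Cmp a g ∧ Cmp g b ∧ a * g * b ≤ h) ∧
  (∃ c ∈ A, ∃ d ∈ A, Cmp c h ∧ Cmp h d ∧ c * h * d ≤ g)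

/-- The relation inducing the order on `≃_A`-classes: `[g] ≤ [k]` iff there are
`a, b ∈ A` with `a g b` defined and `a g b ≤ k`. -/
def leA (A : Set G) (g k : G) : Prop :=
  ∃ a ∈ A, ∃ b ∈ A, Cmp a g ∧ Cmp g b ∧ a * g * b ≤ k

/-- An `A`-nexus between identities `e` and `f`: a pair `(a,p)` of arrows of `A`
with `a𝐝 ≤ e`, `a𝐫 = f`, `p𝐝 ≤ f`, `p𝐫 = e`. -/
def IsNexus (A : Set G) (a p e f : G) : Prop :=
  a ∈ A ∧ p ∈ A ∧ dm a ≤ e ∧ rn a = f ∧ dm p ≤ f ∧ rn p = e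

end OGroupoid

namespace OGroupoid

variable {G : Type u} [OGroupoid G]

lemma cmp_self_inv' (g : G) : Cmp g g⁻¹ := by
  unfold Cmp; rw [gpd_inv_inv]

lemma inv_dm' (g : G) : (g * g⁻¹)⁻¹ = g * g⁻¹ := by
  rw [gpd_mul_inv_rev g g⁻¹ (cmp_self_inv' g), gpd_inv_inv]

lemma dm_idem' (g : G) : (g * g⁻¹) * (g * g⁻¹) = g * g⁻¹ := by
  have := gpd_dom_mul g g⁻¹ (cmp_self_inv' g)
  rwa [inv_dm'] at this

/-- The key asymmetric half of the statement. -/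
lemma simA_half {A : Set G} (hA : IsNormalOSub A) {g h : G}
    (H : ∃ a ∈ A, ∃ b ∈ A, Cmp a g ∧ Cmp g b ∧ a * g * b ≤ h) :
    (∃ a ∈ A, ∃ b ∈ A, Cmp a g⁻¹ ∧ Cmp g⁻¹ b ∧ a * g⁻¹ * b ≤ h⁻¹) ∧
    (∃ a ∈ A, ∃ b ∈ A, Cmp a (dm g) ∧ Cmp (dm g) b ∧ a * dm g * b ≤ dm h) := by
  obtain ⟨a, haA, b, hbA, cag, cgb, hle⟩ := H
  have hinv : ∀ x ∈ A, x⁻¹ ∈ A := hA.1.1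
  have cmpagb : Cmp (a * g) b := by
    unfold Cmp at *
    rw [gpd_ran_mul a g cag, cgb]
  constructor
  · refine ⟨b⁻¹, hinv b hbA, a⁻¹, hinv a haA, ?_, ?_, ?_⟩
    · unfold Cmp at *; rw [gpd_inv_inv, gpd_inv_inv]; exact cgb.symm
    · unfold Cmp at *; rw [gpd_inv_inv, gpd_inv_inv]; exact cag.symm
    · have e1 : (a * g * b)⁻¹ = b⁻¹ * g⁻¹ * a⁻¹ := by
        rw [gpd_mul_inv_rev (a * g) b cmpagb, gpd_mul_inv_rev a g cag]
        rw [gpd_assoc b⁻¹ g⁻¹ a⁻¹]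
        · unfold Cmp at *; rw [gpd_inv_inv, gpd_inv_inv]; exact cgb.symm
        · unfold Cmp at *; rw [gpd_inv_inv, gpd_inv_inv]; exact cag.symm
      rw [← e1]
      exact ord_inv _ _ hle
  · refine ⟨a, haA, a⁻¹, hinv a haA, ?_, ?_, ?_⟩
    · unfold Cmp dm at *; rw [inv_dm', dm_idem']; exact cag
    · unfold Cmp dm at *; rw [inv_dm', gpd_inv_inv, dm_idem']; exact cag.symm
    · have e2 : a * dm g = a := by
        unfold Cmp at cag; unfold dm
        rw [← cag, gpd_id_right]
      have e3 : a * dm g * a⁻¹ = (a * g * b) * (a * g * b)⁻¹ := by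
        rw [e2, gpd_dom_mul (a * g) b cmpagb, gpd_dom_mul a g cag]
      rw [e3]
      unfold dm
      exact ord_mul _ _ _ _ hle (ord_inv _ _ hle) (cmp_self_inv' _) (cmp_self_inv' _)

end OGroupoid

/-- **Statement 9.** If `g ≃_A h` then `g⁻¹ ≃_A h⁻¹` and `g g⁻¹ ≃_A h h⁻¹`. -/
theorem simA_inv_and_dom {G : Type u} [OGroupoid G] (A : Set G)
    (hA : IsNormalOSub A) (g h : G) (hgh : simA A g h) :
    simA A g⁻¹ h⁻¹ ∧ simA A (dm g) (dm h) := by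
  obtain ⟨H1, H2⟩ := hgh
  obtain ⟨I1, I2⟩ := simA_half hA H1
  obtain ⟨J1, J2⟩ := simA_half hA H2
  exact ⟨⟨I1, J1⟩, ⟨I2, J2⟩⟩
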